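/- Let 𝒜 = (Agt, Loc, AP, Lab, Chc_𝒜) be an ATS. Define the implicit CGS ℬ with the same locations and labeling, with Chc_ℬ(ℓ, A_i) = {1, ..., |Chc_𝒜(ℓ, A_i)|}, and, at each location ℓ, with transition list consisting of one pair (φ_{ℓ'}, ℓ') for each ℓ' ∈ Loc, where φ_{ℓ'} = ⋀_{A_i ∈ Agt} ⋁_{j such that ℓ' belongs to the j-th set of Chc_𝒜(ℓ, A_i)} (A_i = j). Then the identity relation on Loc is an alternating bisimulation between 𝒜 and ℬ; in particular, every ATS is alternating-bisimilar to an implicit CGS. -/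
import Mathlib


/-!  Core formalization of concurrent game structures (CGS), alternating
transition systems (ATS), and the logic ATL, following Alur-Henzinger-Kupferman
and Laroussinie-Markey-Oreiby, "On the Expressiveness and Complexity of ATL".

A generic "game structure" `GS Agt Loc P M` has locations labelled by atomic
propositions from `P`, and in each location each agent has a set of available
moves (of type `M`); a joint move (one move per agent) leads to a set of
possible successor locations (a singleton for CGSs, the intersection of the
chosen sets for ATSs). -/

structure GS (Agt Loc P M : Type) where
  lab : Loc → Set P
  mov : Loc → Agt → Set M
  step : Loc → (Agt → M) → Set Loc

namespace GS

variable {Agt Loc P M : Type}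

/-- a complete joint move, valid at `ℓ`. -/
def ValidMove (S : GS Agt Loc P M) (ℓ : Loc) (m : Agt → M) : Prop :=
  ∀ a, m a ∈ S.mov ℓ a

/-- `Next ℓ A mA`: locations reachable from `ℓ` when each member `a` of the
coalition `A` plays `mA a` (and the other agents play arbitrary valid moves). -/
def Next (S : GS Agt Loc P M) (ℓ : Loc) (A : Set Agt) (mA : Agt → M) : Set Loc :=
  {ℓ' | ∃ m, S.ValidMove ℓ m ∧ (∀ a ∈ A, m a = mA a) ∧ ℓ' ∈ S.step ℓ m}

/-- all possible successors of `ℓ`. -/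
def NextAll (S : GS Agt Loc P M) (ℓ : Loc) : Set Loc :=
  {ℓ' | ∃ m, S.ValidMove ℓ m ∧ ℓ' ∈ S.step ℓ m}

/-- the controllable predecessors: `ℓ ∈ CPre A T` iff coalition `A` has a move
forcing the next location to be in `T`. -/
def CPre (S : GS Agt Loc P M) (A : Set Agt) (T : Set Loc) : Set Loc :=
  {ℓ | ∃ mA : Agt → M, (∀ a ∈ A, mA a ∈ S.mov ℓ a) ∧ S.Next ℓ A mA ⊆ T}

theorem cpre_mono (S : GS Agt Loc P M) (A : Set Agt) : Monotone (S.CPre A) := by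
  intro T T' h ℓ hℓ
  obtain ⟨mA, hv, hn⟩ := hℓ
  exact ⟨mA, hv, hn.trans h⟩

/-- A strategy maps the (strict) past history and current location to a move
for each agent (only the moves of the coalition members are relevant). -/
def Strat (Agt Loc M : Type) : Type := List Loc → Loc → Agt → M

def StratValid (S : GS Agt Loc P M) (A : Set Agt) (F : Strat Agt Loc M) : Prop :=
  ∀ h ℓ a, a ∈ A → F h ℓ a ∈ S.mov ℓ a

/-- a strategy is memoryless (state-based) if it only depends on the current
location. -/
def Memoryless (F : Strat Agt Loc M) : Prop :=
  ∀ h h' ℓ a, F h ℓ a = F h' ℓ a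

/-- the history `ρ 0, …, ρ (i-1)`. -/
def hist (ρ : ℕ → Loc) (i : ℕ) : List Loc := List.ofFn (fun j : Fin i => ρ j)

/-- computations from `ℓ`. -/
def Comp (S : GS Agt Loc P M) (ℓ : Loc) (ρ : ℕ → Loc) : Prop :=
  ρ 0 = ℓ ∧ ∀ i, ρ (i + 1) ∈ S.NextAll (ρ i)

/-- the outcomes of a strategy `F` of coalition `A` from `ℓ`. -/
def Out (S : GS Agt Loc P M) (A : Set Agt) (ℓ : Loc) (F : Strat Agt Loc M)
    (ρ : ℕ → Loc) : Prop :=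
  ρ 0 = ℓ ∧ ∀ i, ρ (i + 1) ∈ S.Next (ρ i) A (F (hist ρ i) (ρ i))

end GS

/-! ### ATL syntax and semantics -/

mutual
  /-- ATL state formulas. -/
  inductive SForm (Agt P : Type) : Type where
    | tru : SForm Agt P
    | atom : P → SForm Agt P
    | snot : SForm Agt P → SForm Agt P
    | sor : SForm Agt P → SForm Agt P → SForm Agt P
    | coal : Set Agt → PForm Agt P → SForm Agt P
  /-- ATL path formulas. -/
  inductive PForm (Agt P : Type) : Type where
    | pnot : PForm Agt P → PForm Agt P
    | nxt : SForm Agt P → PForm Agt P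
    | untl : SForm Agt P → SForm Agt P → PForm Agt P
end

mutual
  /-- satisfaction of an ATL state formula at a location. -/
  def SSat {Agt Loc P M : Type} (S : GS Agt Loc P M) : SForm Agt P → Loc → Prop
    | .tru, _ => True
    | .atom p, ℓ => p ∈ S.lab ℓ
    | .snot φ, ℓ => ¬ SSat S φ ℓ
    | .sor φ ψ, ℓ => SSat S φ ℓ ∨ SSat S ψ ℓ
    | .coal A φ, ℓ =>
        ∃ F : GS.Strat Agt Loc M, S.StratValid A F ∧
          ∀ ρ : ℕ → Loc, S.Out A ℓ F ρ → PSat S φ ρ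
  /-- satisfaction of an ATL path formula along a sequence of locations. -/
  def PSat {Agt Loc P M : Type} (S : GS Agt Loc P M) : PForm Agt P → (ℕ → Loc) → Prop
    | .pnot φ, ρ => ¬ PSat S φ ρ
    | .nxt φ, ρ => SSat S φ (ρ 1)
    | .untl φ ψ, ρ => ∃ i, SSat S ψ (ρ i) ∧ ∀ j < i, SSat S φ (ρ j)
end

/-- the release modality:  `φ R ψ := ¬((¬φ) U (¬ψ))`. -/
def PForm.rel {Agt P : Type} (φ ψ : SForm Agt P) : PForm Agt P :=
  .pnot (.untl φ.snot ψ.snot)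

/-- the weak-until modality:  `φ W ψ := ψ R (φ ∨ ψ)`. -/
def PForm.wuntl {Agt P : Type} (φ ψ : SForm Agt P) : PForm Agt P :=
  PForm.rel ψ (φ.sor ψ)

/-- conjunction of state formulas. -/
def SForm.sand {Agt P : Type} (φ ψ : SForm Agt P) : SForm Agt P :=
  .snot (.sor φ.snot ψ.snot)

/-- the set of locations satisfying a state formula. -/
def SatSet {Agt Loc P M : Type} (S : GS Agt Loc P M) (φ : SForm Agt P) : Set Loc :=
  {ℓ | SSat S φ ℓ}

/-! ### Concurrent game structures (explicit) and alternating transition systems -/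

/-- an (explicit) concurrent game structure: moves are natural numbers, and the
transition table gives the successor of each joint move. -/
structure CGS (Agt Loc P : Type) where
  lab : Loc → Set P
  chc : Loc → Agt → Finset ℕ
  edg : Loc → (Agt → ℕ) → Loc

namespace CGS

variable {Agt Loc P : Type}

def WellFormed (G : CGS Agt Loc P) : Prop := ∀ ℓ a, (G.chc ℓ a).Nonempty

def toGS (G : CGS Agt Loc P) : GS Agt Loc P ℕ where
  lab := G.lab
  mov ℓ a := ↑(G.chc ℓ a)
  step ℓ m := {G.edg ℓ m}

/-- a CGS is turn-based if in every location at most one agent has more than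
one available move. -/
def TurnBased (G : CGS Agt Loc P) : Prop :=
  ∀ ℓ (a b : Agt), 1 < (G.chc ℓ a).card → 1 < (G.chc ℓ b).card → a = b

end CGS

/-- an alternating transition system: a move of an agent is a set of locations;
a joint move leads to the intersection of the chosen sets (a singleton when the
ATS is well-formed). -/
structure ATS (Agt Loc P : Type) where
  lab : Loc → Set P
  chc : Loc → Agt → Set (Set Loc)

namespace ATS

variable {Agt Loc P : Type}

/-- well-formedness: each agent always has some available move, and each joint
choice of moves intersects in a singleton. -/
def WellFormed (T : ATS Agt Loc P) : Prop :=
  (∀ ℓ a, (T.chc ℓ a).Nonempty) ∧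
  ∀ ℓ (Q : Agt → Set Loc), (∀ a, Q a ∈ T.chc ℓ a) → ∃ ℓ', (⋂ a, Q a) = {ℓ'}

def toGS (T : ATS Agt Loc P) : GS Agt Loc P (Set Loc) where
  lab := T.lab
  mov := T.chc
  step _ Q := ⋂ a, Q a

end ATS

/-! ### Implicit concurrent game structures -/

/-- boolean formulas over atoms `A_j = c` ("agent `A_j` plays move `c`"). -/
inductive MoveForm (Agt : Type) : Type where
  | tt : MoveForm Agt
  | ff : MoveForm Agt
  | isEq : Agt → ℕ → MoveForm Agt
  | neg : MoveForm Agt → MoveForm Agt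
  | conj : MoveForm Agt → MoveForm Agt → MoveForm Agt
  | disj : MoveForm Agt → MoveForm Agt → MoveForm Agt

/-- evaluation of a move formula under a joint move. -/
def MoveForm.eval {Agt : Type} (m : Agt → ℕ) : MoveForm Agt → Bool
  | .tt => true
  | .ff => false
  | .isEq a c => m a == c
  | .neg φ => ! φ.eval m
  | .conj φ ψ => φ.eval m && ψ.eval m
  | .disj φ ψ => φ.eval m || ψ.eval m

/-- an implicit CGS: in each location, the transition function is given by a
finite list of guarded targets `(φ, ℓ')`; the successor under a joint move is
the target of the first guard that evaluates to true. -/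
structure ICGS (Agt Loc P : Type) where
  lab : Loc → Set P
  chc : Loc → Agt → Finset ℕ
  trans : Loc → List (MoveForm Agt × Loc)

namespace ICGS

variable {Agt Loc P : Type}

/-- the transition function determined by the guarded lists. -/
def edg (G : ICGS Agt Loc P) (ℓ : Loc) (m : Agt → ℕ) : Loc :=
  match (G.trans ℓ).find? (fun e => e.1.eval m) with
  | some e => e.2
  | none => ℓ

def toCGS (G : ICGS Agt Loc P) : CGS Agt Loc P :=
  ⟨G.lab, G.chc, G.edg⟩

def toGS (G : ICGS Agt Loc P) : GS Agt Loc P ℕ := G.toCGS.toGS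

/-- well-formedness: every agent always has an available move, and in each
location the last guard of the transition list is `⊤` (hence no joint move can
produce a deadlock). -/
def WellFormed (G : ICGS Agt Loc P) : Prop :=
  (∀ ℓ a, (G.chc ℓ a).Nonempty) ∧
  ∀ ℓ, ∃ ℓ' : Loc, (G.trans ℓ).getLast? = some (MoveForm.tt, ℓ')

end ICGS

/-! ### Boolean formulas (for QBF-style instances) -/

/-- boolean formulas over a set `V` of variables. -/
inductive BForm (V : Type) : Type where
  | var : V → BForm V
  | bnot : BForm V → BForm V
  | band : BForm V → BForm V → BForm V
  | bor : BForm V → BForm V → BForm V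

/-- evaluation of a boolean formula under a valuation. -/
def BForm.eval {V : Type} (g : V → Bool) : BForm V → Bool
  | .var v => g v
  | .bnot φ => ! φ.eval g
  | .band φ ψ => φ.eval g && ψ.eval g
  | .bor φ ψ => φ.eval g || ψ.eval g

/-- substituting a move formula for each variable. -/
def BForm.subst {V Agt : Type} (σ : V → MoveForm Agt) : BForm V → MoveForm Agt
  | .var v => σ v
  | .bnot φ => .neg (φ.subst σ)
  | .band φ ψ => .conj (φ.subst σ) (ψ.subst σ)
  | .bor φ ψ => .disj (φ.subst σ) (ψ.subst σ)

/-! ### Alternating bisimulation -/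

/-- an alternating bisimulation between two game structures over the same set
of agents (and atomic propositions). -/
def AltBisim {Agt P L₁ L₂ M₁ M₂ : Type}
    (S₁ : GS Agt L₁ P M₁) (S₂ : GS Agt L₂ P M₂) (R : L₁ → L₂ → Prop) : Prop :=
  (∃ l₁ l₂, R l₁ l₂) ∧
  ∀ l₁ l₂, R l₁ l₂ →
    S₁.lab l₁ = S₂.lab l₂ ∧
    (∀ (C : Set Agt) (m : Agt → M₁), (∀ a ∈ C, m a ∈ S₁.mov l₁ a) →
      ∃ m' : Agt → M₂, (∀ a ∈ C, m' a ∈ S₂.mov l₂ a) ∧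
        ∀ q' ∈ S₂.Next l₂ C m', ∃ q ∈ S₁.Next l₁ C m, R q q') ∧
    (∀ (C : Set Agt) (m' : Agt → M₂), (∀ a ∈ C, m' a ∈ S₂.mov l₂ a) →
      ∃ m : Agt → M₁, (∀ a ∈ C, m a ∈ S₁.mov l₁ a) ∧
        ∀ q ∈ S₁.Next l₁ C m, ∃ q' ∈ S₂.Next l₂ C m', R q q')

/-- two game structures are alternating-bisimilar if some alternating
bisimulation relates every location of each to a location of the other. -/
def AltBisimilar {Agt P L₁ L₂ M₁ M₂ : Type}
    (S₁ : GS Agt L₁ P M₁) (S₂ : GS Agt L₂ P M₂) : Prop :=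
  ∃ R : L₁ → L₂ → Prop, AltBisim S₁ S₂ R ∧
    (∀ l₁, ∃ l₂, R l₁ l₂) ∧ (∀ l₂, ∃ l₁, R l₁ l₂)

/-! ### Statement 9

Every ATS is alternating-bisimilar (via the identity relation) to the implicit
CGS obtained by numbering the moves of each agent and guarding each target
location `ℓ'` by the formula
`⋀_{aᵢ ∈ Agt} ⋁_{j : ℓ' belongs to the j-th move of aᵢ} (aᵢ = j)`. -/

open Classical in
/-- the guard `φ_{ℓ'}` of target `ℓ'` in location `ℓ`, given an enumeration
`enum ℓ a 0, …, enum ℓ a (num ℓ a - 1)` of the moves of each agent. -/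
noncomputable def atsGuard {Agt Loc : Type} [Fintype Agt]
    (num : Loc → Agt → ℕ) (enum : Loc → Agt → ℕ → Set Loc)
    (ℓ ℓ' : Loc) : MoveForm Agt :=
  (Finset.univ.toList (α := Agt)).foldr
    (fun a acc =>
      .conj
        (((List.range (num ℓ a)).filter
            (fun j => decide (ℓ' ∈ enum ℓ a j))).foldr
          (fun j acc₂ => .disj (.isEq a j) acc₂) .ff)
        acc)
    .tt

/-- the implicit CGS associated with an ATS. -/
noncomputable def atsToICGS {Agt Loc P : Type} [Fintype Agt] [Fintype Loc]
    (T : ATS Agt Loc P) (num : Loc → Agt → ℕ) (enum : Loc → Agt → ℕ → Set Loc) :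
    ICGS Agt Loc P where
  lab := T.lab
  chc ℓ a := Finset.range (num ℓ a)
  trans ℓ := (Finset.univ.toList (α := Loc)).map (fun ℓ' => (atsGuard num enum ℓ ℓ', ℓ'))

lemma foldr_conj_eval {Agt α : Type} (m : Agt → ℕ) (f : α → MoveForm Agt) (L : List α) :
    ((L.foldr (fun a acc => MoveForm.conj (f a) acc) MoveForm.tt).eval m = true) ↔
      ∀ a ∈ L, (f a).eval m = true := by
  induction L with
  | nil => simp [MoveForm.eval]
  | cons x xs ih => simp [MoveForm.eval, ih]

lemma foldr_disj_eval {Agt : Type} (m : Agt → ℕ) (a : Agt) (L : List ℕ) :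
    ((L.foldr (fun j acc => MoveForm.disj (MoveForm.isEq a j) acc) MoveForm.ff).eval m = true) ↔
      ∃ j ∈ L, m a = j := by
  induction L with
  | nil => simp [MoveForm.eval]
  | cons x xs ih => simp [MoveForm.eval, ih]

lemma atsGuard_eval {Agt Loc : Type} [Fintype Agt]
    (num : Loc → Agt → ℕ) (enum : Loc → Agt → ℕ → Set Loc) (ℓ ℓ' : Loc) (m : Agt → ℕ) :
    (atsGuard num enum ℓ ℓ').eval m = true ↔
      ∀ a, m a < num ℓ a ∧ ℓ' ∈ enum ℓ a (m a) := by
  unfold atsGuard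
  rw [foldr_conj_eval]
  constructor
  · intro h a
    have h2 := h a (by simp)
    rw [foldr_disj_eval] at h2
    obtain ⟨j, hj, hm⟩ := h2
    simp only [List.mem_filter, List.mem_range, decide_eq_true_eq] at hj
    subst hm
    exact ⟨hj.1, hj.2⟩
  · intro h a _
    rw [foldr_disj_eval]
    refine ⟨m a, ?_, rfl⟩
    simp only [List.mem_filter, List.mem_range, decide_eq_true_eq]
    exact ⟨(h a).1, (h a).2⟩

lemma edg_mem {Agt Loc P : Type} [Fintype Agt] [Fintype Loc]
    (T : ATS Agt Loc P) (hwf : T.WellFormed)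
    (num : Loc → Agt → ℕ) (enum : Loc → Agt → ℕ → Set Loc)
    (henum : ∀ ℓ a, Set.BijOn (enum ℓ a) {j : ℕ | j < num ℓ a} (T.chc ℓ a))
    (ℓ : Loc) (m : Agt → ℕ) (hm : ∀ a, m a < num ℓ a) :
    (⋂ a, enum ℓ a (m a)) = {(atsToICGS T num enum).edg ℓ m} := by
  obtain ⟨ℓ₀, h0⟩ := hwf.2 ℓ (fun a => enum ℓ a (m a))
    (fun a => (henum ℓ a).mapsTo (hm a))
  have hmem0 : ∀ a, ℓ₀ ∈ enum ℓ a (m a) := by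
    intro a
    have : ℓ₀ ∈ ⋂ a, enum ℓ a (m a) := by rw [h0]; exact rfl
    exact Set.mem_iInter.mp this a
  have hguard : ∀ ℓ' : Loc, (atsGuard num enum ℓ ℓ').eval m = true ↔ ℓ' = ℓ₀ := by
    intro ℓ'
    rw [atsGuard_eval]
    constructor
    · intro h
      have : ℓ' ∈ ⋂ a, enum ℓ a (m a) := Set.mem_iInter.mpr fun a => (h a).2
      rw [h0] at this
      exact this
    · rintro rfl a
      exact ⟨hm a, hmem0 a⟩
  have hedg : (atsToICGS T num enum).edg ℓ m = ℓ₀ := by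
    unfold ICGS.edg
    have : ((atsToICGS T num enum).trans ℓ).find? (fun e => e.1.eval m) =
        some (atsGuard num enum ℓ ℓ₀, ℓ₀) := by
      show ((Finset.univ.toList (α := Loc)).map
        (fun ℓ' => (atsGuard num enum ℓ ℓ', ℓ'))).find? (fun e => e.1.eval m) = _
      rw [List.find?_map]
      have hfind : (Finset.univ.toList (α := Loc)).find?
          ((fun e => e.1.eval m) ∘ fun ℓ' => (atsGuard num enum ℓ ℓ', ℓ')) = some ℓ₀ := by
        cases hf : (Finset.univ.toList (α := Loc)).find?
            ((fun e => e.1.eval m) ∘ fun ℓ' => (atsGuard num enum ℓ ℓ', ℓ')) with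
        | none =>
          exfalso
          have := List.find?_eq_none.mp hf ℓ₀ (by simp)
          exact this ((hguard ℓ₀).mpr rfl)
        | some x =>
          have := List.find?_some hf
          have hx : x = ℓ₀ := (hguard x).mp this
          rw [hx]
      rw [hfind]
      rfl
    rw [this]
  rw [hedg, h0]

theorem ats_to_implicit_cgs_bisim
    (Agt Loc P : Type) [Fintype Agt] [Fintype Loc] [Fintype P] [Nonempty Loc]
    (T : ATS Agt Loc P) (hwf : T.WellFormed)
    (num : Loc → Agt → ℕ) (enum : Loc → Agt → ℕ → Set Loc)
    (henum : ∀ ℓ a, Set.BijOn (enum ℓ a) {j : ℕ | j < num ℓ a} (T.chc ℓ a)) :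
    AltBisim T.toGS (atsToICGS T num enum).toGS (fun l l' => l = l') ∧
    AltBisimilar T.toGS (atsToICGS T num enum).toGS := by
  classical
  set B := atsToICGS T num enum with hBdef
  have hedg : ∀ ℓ (n : Agt → ℕ), (∀ a, n a < num ℓ a) →
      (⋂ a, enum ℓ a (n a)) = {B.edg ℓ n} := edg_mem T hwf num enum henum
  have hmovB : ∀ ℓ (a : Agt) (j : ℕ), j ∈ B.toGS.mov ℓ a ↔ j < num ℓ a := by
    intro ℓ a j
    show j ∈ (↑(Finset.range (num ℓ a)) : Set ℕ) ↔ _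
    simp
  have hidx : ∀ ℓ (a : Agt) (Q : Set Loc), Q ∈ T.chc ℓ a →
      ∃ j, j < num ℓ a ∧ enum ℓ a j = Q := by
    intro ℓ a Q hQ
    obtain ⟨j, hj, hje⟩ := (henum ℓ a).surjOn hQ
    exact ⟨j, hj, hje⟩
  have main : AltBisim T.toGS B.toGS (fun l l' => l = l') := by
    refine ⟨⟨Classical.arbitrary Loc, Classical.arbitrary Loc, rfl⟩, ?_⟩
    intro l₁ l₂ h; subst h
    set ℓ := l₁
    refine ⟨rfl, ?_, ?_⟩
    · -- forward: A-move to B-move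
      intro C m hm
      -- complete m into a full valid move Q
      have hQ : ∀ a, ∃ Q : Set Loc, Q ∈ T.chc ℓ a ∧ (a ∈ C → Q = m a) := by
        intro a
        by_cases ha : a ∈ C
        · exact ⟨m a, hm a ha, fun _ => rfl⟩
        · obtain ⟨Q, hQ⟩ := hwf.1 ℓ a
          exact ⟨Q, hQ, fun h => absurd h ha⟩
      choose Q hQmem hQC using hQ
      choose m' hm'lt hm'enum using fun a => hidx ℓ a (Q a) (hQmem a)
      refine ⟨m', fun a _ => (hmovB ℓ a (m' a)).mpr (hm'lt a), ?_⟩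
      rintro q' ⟨n, hnval, hnC, hnstep⟩
      have hnlt : ∀ a, n a < num ℓ a := fun a => (hmovB ℓ a (n a)).mp (hnval a)
      have hq' : q' = B.edg ℓ n := hnstep
      have hqmem : q' ∈ ⋂ a, enum ℓ a (n a) := by
        rw [hedg ℓ n hnlt, hq']; exact rfl
      refine ⟨q', ⟨fun a => enum ℓ a (n a),
        fun a => (henum ℓ a).mapsTo (hnlt a), ?_, Set.mem_iInter.mpr
          fun a => Set.mem_iInter.mp hqmem a⟩, rfl⟩
      intro a ha
      show enum ℓ a (n a) = m a
      rw [hnC a ha, hm'enum a, hQC a ha]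
    · -- backward: B-move to A-move
      intro C m' hm'
      have hm'lt : ∀ a ∈ C, m' a < num ℓ a := fun a ha => (hmovB ℓ a (m' a)).mp (hm' a ha)
      have hmA : ∀ a, ∃ Q : Set Loc, Q ∈ T.chc ℓ a ∧ (a ∈ C → Q = enum ℓ a (m' a)) := by
        intro a
        by_cases ha : a ∈ C
        · exact ⟨enum ℓ a (m' a), (henum ℓ a).mapsTo (hm'lt a ha), fun _ => rfl⟩
        · obtain ⟨Q, hQ⟩ := hwf.1 ℓ a
          exact ⟨Q, hQ, fun h => absurd h ha⟩
      choose mQ hmQmem hmQC using hmA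
      refine ⟨mQ, fun a _ => hmQmem a, ?_⟩
      rintro q ⟨R, hRval, hRC, hRstep⟩
      -- pick indices n agreeing with m' on C
      have hn : ∀ a, ∃ j, j < num ℓ a ∧ enum ℓ a j = R a ∧ (a ∈ C → j = m' a) := by
        intro a
        by_cases ha : a ∈ C
        · refine ⟨m' a, hm'lt a ha, ?_, fun _ => rfl⟩
          rw [hRC a ha, hmQC a ha]
        · obtain ⟨j, hj, hje⟩ := hidx ℓ a (R a) (hRval a)
          exact ⟨j, hj, hje, fun h => absurd h ha⟩
      choose n hnlt hnenum hnC using hn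
      have hqmem : q ∈ ⋂ a, enum ℓ a (n a) := by
        refine Set.mem_iInter.mpr fun a => ?_
        rw [hnenum a]
        exact Set.mem_iInter.mp hRstep a
      rw [hedg ℓ n hnlt] at hqmem
      refine ⟨q, ⟨n, fun a => (hmovB ℓ a (n a)).mpr (hnlt a),
        fun a ha => hnC a ha, hqmem⟩, rfl⟩
  exact ⟨main, ⟨fun l l' => l = l', main, fun l => ⟨l, rfl⟩, fun l => ⟨l, rfl⟩⟩⟩
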